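/- arXiv:1511.04550 — 4 statements merged into one kernel-verified Lean document; each statement's English description precedes it below -/
import Mathlib

section
/- Let P be a finite nonabelian 2-group containing an element g of order 4 and at least two involutions, and suppose P contains no subgroup isomorphic to C4 × C2. Then the center of P is the cyclic group ⟨g^2⟩ of order 2. -/
/-- `C4 × C2`. -/
abbrev C4xC2 := Multiplicative (ZMod 4) × Multiplicative (ZMod 2)

/-!
A central involution `z ≠ g²` would give `⟨g⟩ × ⟨z⟩ ≅ C4 × C2`, so `g²` is the only possible
central involution; since the centre of a nontrivial 2-group is nontrivial, it is one. A central
element of order at least 4 would have a power `d` of order 4, and `⟨d⟩ × ⟨w⟩ ≅ C4 × C2` for an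
involution `w ≠ d² = g²`, which exists because `P` has two involutions. Hence the centre is
`{1, g²}`.
-/

open Subgroup

section

variable {G : Type*} [Group G]

theorem exists_injective_zmod_range_eq_zpowers {n : ℕ} {g : G} (hg : orderOf g = n) :
    ∃ f : Multiplicative (ZMod n) →* G, Function.Injective f ∧ f.range = zpowers g := by
  subst hg
  obtain ⟨e⟩ : Nonempty (Multiplicative (ZMod (orderOf g)) ≃* zpowers g) :=
    ⟨zmodMulEquivOfGenerator (g := ⟨g, mem_zpowers g⟩) (fun ⟨_, k, hk⟩ ↦ ⟨k, Subtype.ext hk⟩)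
      (Nat.card_zpowers g)⟩
  refine ⟨(zpowers g).subtype.comp e.toMonoidHom, Subtype.val_injective.comp e.injective, ?_⟩
  rw [MonoidHom.range_comp, MonoidHom.range_eq_top_of_surjective _ e.surjective,
    ← MonoidHom.range_eq_map, range_subtype]

theorem eq_pow_two_of_mem_zpowers {c t : G} (hc : orderOf c = 4) (ht : orderOf t = 2)
    (h : t ∈ zpowers c) : t = c ^ 2 := by
  classical
  obtain ⟨k, hk, rfl⟩ := Finset.mem_image.1
    ((orderOf_pos_iff.1 (by omega)).mem_zpowers_iff_mem_range_orderOf.1 h)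
  rw [hc, Finset.mem_range] at hk
  interval_cases k <;> simp_all [orderOf_pow' c, Nat.gcd]

theorem exists_injective_C4xC2_of_commute {c t : G} (hc : orderOf c = 4) (ht : orderOf t = 2)
    (hct : Commute c t) (hne : t ≠ c ^ 2) : ∃ f : C4xC2 →* G, Function.Injective f := by
  classical
  obtain ⟨f, hf, hfc⟩ := exists_injective_zmod_range_eq_zpowers hc
  obtain ⟨f', hf', hft⟩ := exists_injective_zmod_range_eq_zpowers ht
  have hcomm : ∀ a b, Commute (f a) (f' b) := by
    intro a b
    obtain ⟨i, hi⟩ := mem_zpowers_iff.1 (hfc ▸ ⟨a, rfl⟩ : f a ∈ zpowers c)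
    obtain ⟨j, hj⟩ := mem_zpowers_iff.1 (hft ▸ ⟨b, rfl⟩ : f' b ∈ zpowers t)
    rw [← hi, ← hj]
    exact hct.zpow_zpow i j
  refine ⟨f.noncommCoprod f' hcomm, (MonoidHom.noncommCoprod_injective _ _ _).2 ⟨hf, hf', ?_⟩⟩
  rw [hfc, hft, disjoint_def]
  intro x hxc hxt
  obtain ⟨k, hk, rfl⟩ := Finset.mem_image.1
    ((orderOf_pos_iff.1 (by omega)).mem_zpowers_iff_mem_range_orderOf.1 hxt)
  rw [ht, Finset.mem_range] at hk
  interval_cases k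
  · exact pow_zero t
  · exact absurd (eq_pow_two_of_mem_zpowers hc ht (by simpa using hxc)) hne

theorem IsPGroup.exists_orderOf_pow_eq_sq {p : ℕ} [Fact p.Prime] (hG : IsPGroup p G) {s : G}
    (hs : s ^ p ≠ 1) : ∃ n, orderOf (s ^ n) = p ^ 2 := by
  obtain ⟨k, hk⟩ := IsPGroup.iff_orderOf.1 hG s
  have hk2 : 2 ≤ k := by
    by_contra! hk1
    refine hs (orderOf_dvd_iff_pow_eq_one.1 ?_)
    rw [hk]
    exact (pow_dvd_pow p (by omega : k ≤ 1)).trans (pow_one p).dvd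
  exact ⟨orderOf s / p ^ 2, orderOf_pow_orderOf_div (hk ▸ (pow_pos (Fact.out : p.Prime).pos k).ne')
    (hk ▸ pow_dvd_pow p hk2)⟩

theorem eq_pow_two_of_mem_center (hno : ¬ ∃ f : C4xC2 →* G, Function.Injective f)
    {g : G} (hg : orderOf g = 4) {z : G} (hz : z ∈ center G) (hz2 : orderOf z = 2) : z = g ^ 2 :=
  not_not.1 fun hne ↦ hno (exists_injective_C4xC2_of_commute hg hz2 (mem_center_iff.1 hz g) hne)

theorem sq_eq_one_of_mem_center (hno : ¬ ∃ f : C4xC2 →* G, Function.Injective f)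
    (hG : IsPGroup 2 G) {g : G} (hg : orderOf g = 4) {w : G} (hw : orderOf w = 2) (hwg : w ≠ g ^ 2)
    {s : G} (hs : s ∈ center G) : s ^ 2 = 1 := by
  by_contra hs2
  obtain ⟨n, hn⟩ := hG.exists_orderOf_pow_eq_sq hs2
  have hn4 : orderOf (s ^ n) = 4 := hn
  have hd : s ^ n ∈ center G := pow_mem hs n
  have hd2 : (s ^ n) ^ 2 = g ^ 2 :=
    eq_pow_two_of_mem_center hno hg (pow_mem hd 2) (by rw [orderOf_pow' _ two_ne_zero, hn4]; rfl)
  exact hno (exists_injective_C4xC2_of_commute hn4 hw (mem_center_iff.1 hd w).symm (hd2 ▸ hwg))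

end

theorem center_eq_of_no_C4xC2_general (P : Type*) [Group P] [Finite P]
    (hP : IsPGroup 2 P)
    (g : P) (hg : orderOf g = 4)
    (x y : P) (hx : orderOf x = 2) (hy : orderOf y = 2) (hxy : x ≠ y)
    (hno : ¬ ∃ f : C4xC2 →* P, Function.Injective f) :
    Subgroup.center P = Subgroup.zpowers (g ^ 2) ∧ orderOf (g ^ 2) = 2 := by
  have hg2 : orderOf (g ^ 2) = 2 := by rw [orderOf_pow, hg]; rfl
  obtain ⟨w, hw, hwg⟩ : ∃ w : P, orderOf w = 2 ∧ w ≠ g ^ 2 := by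
    rcases eq_or_ne x (g ^ 2) with rfl | hxg
    · exact ⟨y, hy, hxy.symm⟩
    · exact ⟨x, hx, hxg⟩
  have hcenter : ∀ s ∈ center P, s = 1 ∨ s = g ^ 2 := fun s hs ↦
    or_iff_not_imp_left.2 fun hs1 ↦ eq_pow_two_of_mem_center hno hg hs
      (orderOf_eq_prime (sq_eq_one_of_mem_center hno hP hg hw hwg hs) hs1)
  have : Nontrivial P := nontrivial_of_ne g 1 fun h ↦ by simp [h] at hg
  obtain ⟨z, hz, hz1⟩ := (nontrivial_iff_exists_ne_one _).1 hP.center_nontrivial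
  have hg2c : g ^ 2 ∈ center P := (hcenter z hz).resolve_left hz1 ▸ hz
  refine ⟨le_antisymm (fun s hs ↦ ?_) (zpowers_le.2 hg2c), hg2⟩
  rcases hcenter s hs with rfl | rfl
  · exact one_mem _
  · exact mem_zpowers _

/-- Let `P` be a finite nonabelian 2-group containing an element `g` of order 4 and at least
two involutions, with no subgroup isomorphic to `C4 × C2`. Then `Z(P) = ⟨g²⟩` is cyclic of
order 2. -/
theorem center_eq_of_no_C4xC2 (P : Type*) [Group P] [Finite P]
    (hP : IsPGroup 2 P) (hnab : ∃ x y : P, x * y ≠ y * x)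
    (g : P) (hg : orderOf g = 4)
    (x y : P) (hx : orderOf x = 2) (hy : orderOf y = 2) (hxy : x ≠ y)
    (hno : ¬ ∃ f : C4xC2 →* P, Function.Injective f) :
    Subgroup.center P = Subgroup.zpowers (g ^ 2) ∧ orderOf (g ^ 2) = 2 :=
  center_eq_of_no_C4xC2_general P hP g hg x y hx hy hxy hno
end

section
/- Let P be a finite 2-group with central element g of order 4 such that Z(P) = ⟨g^2⟩, and let a be an involution of P not in the center with the property that a and g generate no subgroup isomorphic to C4 × C2. If a^g · a commutes with g, then a^g = a·g^2. -/
open Subgroup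

section

variable {G : Type*} [Group G]

lemma exists_zmod_embedding_range_eq_zpowers {g : G} {n : ℕ} (hg : orderOf g = n) :
    ∃ f : Multiplicative (ZMod n) →* G, Function.Injective f ∧ f.range = zpowers g := by
  let e := zmodMulEquivOfGenerator (G := zpowers g) (g := ⟨g, mem_zpowers g⟩)
    (by rintro ⟨_, k, rfl⟩; exact ⟨k, rfl⟩) (by rw [Nat.card_zpowers, hg])
  refine ⟨(zpowers g).subtype.comp (e : _ →* zpowers g),
    Subtype.val_injective.comp e.injective, ?_⟩
  rw [MonoidHom.range_comp, MulEquiv.range_eq_top, ← MonoidHom.range_eq_map, range_subtype]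

lemma exists_prod_zmod_embedding {g z : G} {m n : ℕ} (hg : orderOf g = m) (hz : orderOf z = n)
    (hgz : Commute g z) (hdisj : Disjoint (zpowers g) (zpowers z)) :
    ∃ f : Multiplicative (ZMod m) × Multiplicative (ZMod n) →* G,
      Function.Injective f ∧ f.range = zpowers g ⊔ zpowers z := by
  obtain ⟨f₁, hf₁, hr₁⟩ := exists_zmod_embedding_range_eq_zpowers hg
  obtain ⟨f₂, hf₂, hr₂⟩ := exists_zmod_embedding_range_eq_zpowers hz
  have hcomm : ∀ x y, Commute (f₁ x) (f₂ y) := by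
    intro x y
    obtain ⟨i, hi⟩ : f₁ x ∈ zpowers g := hr₁ ▸ ⟨x, rfl⟩
    obtain ⟨j, hj⟩ : f₂ y ∈ zpowers z := hr₂ ▸ ⟨y, rfl⟩
    rw [← hi, ← hj]
    exact hgz.zpow_zpow i j
  refine ⟨f₁.noncommCoprod f₂ hcomm, ?_, ?_⟩
  · exact (MonoidHom.noncommCoprod_injective _ _ _).2 ⟨hf₁, hf₂, hr₁ ▸ hr₂ ▸ hdisj⟩
  · rw [MonoidHom.noncommCoprod_range, hr₁, hr₂]

lemma eq_one_or_eq_of_mem_zpowers_of_sq_eq_one {z x : G} (hz : z ^ 2 = 1) (hx : x ∈ zpowers z) :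
    x = 1 ∨ x = z := by
  obtain ⟨k, rfl⟩ := hx
  obtain ⟨t, rfl | rfl⟩ := Int.even_or_odd' k <;> dsimp only
  · left; rw [zpow_mul, zpow_ofNat, hz, one_zpow]
  · right; rw [zpow_add, zpow_mul, zpow_ofNat, hz, one_zpow, one_mul, zpow_one]

lemma eq_one_or_eq_pow_of_mem_zpowers_of_sq_eq_one {g x : G} {m : ℕ} (hg : orderOf g = 2 * m)
    (hx : x ∈ zpowers g) (hx2 : x ^ 2 = 1) : x = 1 ∨ x = g ^ m := by
  obtain ⟨k, rfl⟩ := hx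
  rw [← zpow_natCast, ← zpow_mul, ← orderOf_dvd_iff_zpow_eq_one, hg] at hx2
  obtain ⟨j, rfl⟩ : (m : ℤ) ∣ k := by
    obtain ⟨j, hj⟩ := hx2; exact ⟨j, by push_cast at hj; linarith⟩
  refine eq_one_or_eq_of_mem_zpowers_of_sq_eq_one ?_
    ⟨j, by dsimp only; rw [zpow_mul, zpow_natCast]⟩
  rw [← pow_mul, mul_comm, ← hg, pow_orderOf_eq_one]

lemma disjoint_zpowers_of_orderOf_eq_two {g z : G} (hz : orderOf z = 2) (hzg : z ∉ zpowers g) :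
    Disjoint (zpowers g) (zpowers z) := by
  rw [disjoint_def]
  intro x hxg hxz
  rcases eq_one_or_eq_of_mem_zpowers_of_sq_eq_one (hz ▸ pow_orderOf_eq_one z) hxz with rfl | rfl
  · rfl
  · exact absurd hxg hzg

lemma sq_conj_mul_self_eq_one {a g : G} (ha : a ^ 2 = 1) (hag : Commute a (g ^ 2))
    (h : Commute (g⁻¹ * a * g * a) g) : (g⁻¹ * a * g * a) ^ 2 = 1 := by
  have ha' : a⁻¹ = a := inv_eq_of_mul_eq_one_right (by rwa [← sq])
  have hconj_sq : g⁻¹ * g⁻¹ * a * g * g = a := by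
    simpa only [sq, mul_inv_rev, mul_assoc] using (eq_inv_mul_of_mul_eq hag.eq.symm).symm
  have hfix : g⁻¹ * (g⁻¹ * a * g * a) * g = g⁻¹ * a * g * a := by
    rw [mul_assoc, h.eq, inv_mul_cancel_left]
  have hinv : g⁻¹ * (g⁻¹ * a * g * a) * g = (g⁻¹ * a * g * a)⁻¹ :=
    calc g⁻¹ * (g⁻¹ * a * g * a) * g = (g⁻¹ * g⁻¹ * a * g * g) * (g⁻¹ * a * g) := by group
      _ = _ := by rw [hconj_sq]; simp only [mul_inv_rev, inv_inv, ha']; group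
  rw [sq, mul_eq_one_iff_eq_inv, ← hinv, hfix]

end

theorem conj_involution_eq_general (P : Type*) [Group P] (g a : P) (hg : orderOf g = 4)
    (hZ : Subgroup.center P = Subgroup.zpowers (g ^ 2))
    (ha : orderOf a = 2) (hanc : a ∉ Subgroup.center P)
    (hno : ¬ ∃ f : C4xC2 →* P,
      Function.Injective f ∧ f.range ≤ Subgroup.closure {a, g})
    (hcomm : Commute (g⁻¹ * a * g * a) g) :
    g⁻¹ * a * g = a * g ^ 2 := by
  have hg2 : g ^ 2 ∈ center P := hZ ▸ mem_zpowers _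
  have ha2 : a ^ 2 = 1 := ha ▸ pow_orderOf_eq_one a
  have ha_inv : a⁻¹ = a := inv_eq_of_mul_eq_one_right (by rwa [← sq])
  have haH : a ∈ closure ({a, g} : Set P) := subset_closure (by simp)
  have hgH : g ∈ closure ({a, g} : Set P) := subset_closure (by simp)
  have involution_mem : ∀ z ∈ closure ({a, g} : Set P), z ^ 2 = 1 → Commute g z →
      z = 1 ∨ z = g ^ 2 := by
    intro z hzH hz2 hgz
    refine eq_one_or_eq_pow_of_mem_zpowers_of_sq_eq_one (m := 2) hg ?_ hz2
    by_contra hzg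
    have hz : orderOf z = 2 := orderOf_eq_prime hz2 fun h => hzg (h ▸ one_mem _)
    obtain ⟨f, hf, hrange⟩ := exists_prod_zmod_embedding hg hz hgz
      (disjoint_zpowers_of_orderOf_eq_two hz hzg)
    exact hno ⟨f, hf, hrange ▸ sup_le (zpowers_le.2 hgH) (zpowers_le.2 hzH)⟩
  have hcH : g⁻¹ * a * g * a ∈ closure ({a, g} : Set P) :=
    mul_mem (mul_mem (mul_mem (inv_mem hgH) haH) hgH) haH
  have hc2 := sq_conj_mul_self_eq_one ha2 (mem_center_iff.1 hg2 a) hcomm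
  rcases involution_mem _ hcH hc2 hcomm.symm with hc | hc
  · have hga : Commute g a := by
      rw [mul_eq_one_iff_eq_inv, ha_inv, mul_assoc, inv_mul_eq_iff_eq_mul] at hc
      exact hc.symm
    rcases involution_mem a haH ha2 hga with rfl | rfl
    · simp at ha
    · exact absurd hg2 hanc
  · rw [eq_mul_inv_of_mul_eq hc, ha_inv, mem_center_iff.1 hg2 a]

/-- Let `P` be a finite 2-group with an element `g` of order 4 such that `Z(P) = ⟨g²⟩`, and
let `a` be a noncentral involution of `P` such that `a` and `g` generate no subgroup
isomorphic to `C4 × C2`. If `aᵍ · a` commutes with `g`, then `aᵍ = a g²`. -/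
theorem conj_involution_eq (P : Type*) [Group P] [Finite P]
    (hP : IsPGroup 2 P) (g a : P) (hg : orderOf g = 4)
    (hZ : Subgroup.center P = Subgroup.zpowers (g ^ 2))
    (ha : orderOf a = 2) (hanc : a ∉ Subgroup.center P)
    (hno : ¬ ∃ f : C4xC2 →* P,
      Function.Injective f ∧ f.range ≤ Subgroup.closure {a, g})
    (hcomm : Commute (g⁻¹ * a * g * a) g) :
    g⁻¹ * a * g = a * g ^ 2 :=
  conj_involution_eq_general P g a hg hZ ha hanc hno hcomm
end

section
/- Let r be an odd prime power, q = r^2, and let α be an element of maximal 2-power order in the multiplicative group F_q^×. Let σ: F_q → F_q be the Frobenius automorphism x ↦ x^r. Then σ(α) = -α^{-1} if r ≡ 3 (mod 4), and σ(α) = -α if r ≡ 1 (mod 4). -/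
/-!
Write `2 ^ n` for the order of `α`, where `n = ν₂(r² - 1) = ν₂(r - 1) + ν₂(r + 1)`. Exactly one
of `r - 1`, `r + 1` is `2 (mod 4)`, so `n = ν₂(s) + 1` where `s` is the other one. As
`α ^ 2 ^ (n - 1) = -1` and `s / 2 ^ ν₂(s)` is odd, `α ^ s = -1`; for `s = r + 1` this says
`α ^ r = -α⁻¹`, for `s = r - 1` it says `α ^ r = -α`.
-/

namespace Nat

theorem factorization_two_eq_one_of_mod_four_eq_two {n : ℕ} (hn : n % 4 = 2) :
    n.factorization 2 = 1 := by
  obtain ⟨t, rfl⟩ : ∃ t, n = 2 * (2 * t + 1) := ⟨n / 4, by omega⟩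
  rw [factorization_mul two_ne_zero (by omega), Finsupp.add_apply, prime_two.factorization_self,
    factorization_eq_zero_of_not_dvd (by omega)]

theorem factorization_two_sq_sub_one {r : ℕ} (hr : 2 ≤ r) :
    (r ^ 2 - 1).factorization 2 = (r + 1).factorization 2 + (r - 1).factorization 2 := by
  rw [show r ^ 2 - 1 = (r + 1) * (r - 1) by simpa using Nat.sq_sub_sq r 1,
    factorization_mul (by omega) (by omega), Finsupp.add_apply]

theorem factorization_two_sq_sub_one_of_mod_four_eq_three {r : ℕ} (hr : r % 4 = 3) :
    (r ^ 2 - 1).factorization 2 = (r + 1).factorization 2 + 1 := by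
  rw [factorization_two_sq_sub_one (by omega),
    factorization_two_eq_one_of_mod_four_eq_two (n := r - 1) (by omega)]

theorem factorization_two_sq_sub_one_of_mod_four_eq_one {r : ℕ} (hr : r % 4 = 1) (hr2 : 2 ≤ r) :
    (r ^ 2 - 1).factorization 2 = (r - 1).factorization 2 + 1 := by
  rw [factorization_two_sq_sub_one hr2,
    factorization_two_eq_one_of_mod_four_eq_two (n := r + 1) (by omega), add_comm]

end Nat

namespace IsPrimitiveRoot

variable {R : Type*} [CommRing R] [NoZeroDivisors R] {ζ : R}

theorem pow_two_pow_eq_neg_one {k : ℕ} (h : IsPrimitiveRoot ζ (2 ^ (k + 1))) :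
    ζ ^ 2 ^ k = -1 := by
  have h2 := h.pow_of_dvd (by positivity) (pow_dvd_pow 2 k.le_succ)
  rw [pow_succ, Nat.mul_div_cancel_left _ (by positivity)] at h2
  exact h2.eq_neg_one_of_two_right

theorem pow_eq_neg_one_of_factorization_two {n : ℕ} (hn : n ≠ 0)
    (h : IsPrimitiveRoot ζ (2 ^ (n.factorization 2 + 1))) : ζ ^ n = -1 := by
  have hodd : Odd (n / 2 ^ n.factorization 2) :=
    Nat.odd_iff.mpr (by have := Nat.not_dvd_ordCompl Nat.prime_two hn; omega)
  calc ζ ^ n = (ζ ^ 2 ^ n.factorization 2) ^ (n / 2 ^ n.factorization 2) := by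
        rw [← pow_mul, Nat.ordProj_mul_ordCompl_eq_self]
    _ = -1 := by rw [h.pow_two_pow_eq_neg_one, hodd.neg_one_pow]

end IsPrimitiveRoot

theorem frobenius_of_max_two_power_order_general (F : Type*) [Field F] [Fintype F]
    (r : ℕ) (hcard : Fintype.card F = r ^ 2)
    (α : Fˣ) (hα : orderOf α = 2 ^ ((Fintype.card F - 1).factorization 2)) :
    (r % 4 = 3 → (α : F) ^ r = -((α⁻¹ : Fˣ) : F)) ∧
      (r % 4 = 1 → (α : F) ^ r = -(α : F)) := by
  have hr2 : 2 ≤ r := (one_lt_pow_iff two_ne_zero).mp (hcard ▸ Fintype.one_lt_card)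
  have hζ : IsPrimitiveRoot (α : F) (2 ^ (r ^ 2 - 1).factorization 2) := by
    rw [IsPrimitiveRoot.iff_orderOf, orderOf_units, hα, hcard]
  refine ⟨fun hr3 => ?_, fun hr1 => ?_⟩
  · rw [Nat.factorization_two_sq_sub_one_of_mod_four_eq_three hr3] at hζ
    have hsucc := hζ.pow_eq_neg_one_of_factorization_two (by omega)
    rw [Units.val_inv_eq_inv_val, eq_neg_iff_add_eq_zero]
    field_simp
    linear_combination hsucc
  · rw [Nat.factorization_two_sq_sub_one_of_mod_four_eq_one hr1 hr2] at hζ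
    have hpred := hζ.pow_eq_neg_one_of_factorization_two (by omega)
    rw [← Nat.sub_add_cancel (by omega : 1 ≤ r), pow_succ, hpred, neg_one_mul]

/-- Let `r` be an odd prime power, `F` the field with `q = r^2` elements, `α` an element of
maximal 2-power order in `Fˣ`, and `σ : x ↦ x^r` the Frobenius. Then `σ(α) = -α⁻¹` if
`r ≡ 3 (mod 4)` and `σ(α) = -α` if `r ≡ 1 (mod 4)`. -/
theorem frobenius_of_max_two_power_order (F : Type*) [Field F] [Fintype F]
    (r : ℕ) (hr : Odd r) (hpp : IsPrimePow r) (hcard : Fintype.card F = r ^ 2)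
    (α : Fˣ) (hα : orderOf α = 2 ^ ((Fintype.card F - 1).factorization 2)) :
    (r % 4 = 3 → (α : F) ^ r = -((α⁻¹ : Fˣ) : F)) ∧
      (r % 4 = 1 → (α : F) ^ r = -(α : F)) :=
  frobenius_of_max_two_power_order_general F r hcard α hα
end

section
/- Let q be an odd prime power with q a square, q = r^2, σ the Frobenius x ↦ x^r on F_q, and α an element of maximal 2-power order in F_q^×. Define g = diag(1, α) if r ≡ 3 (mod 4). Then the map φ: PSL(2, q) → PSL(2, q) given by first applying σ entrywise and then conjugating by the image of g is an automorphism of PSL(2, q) of order 4 whose square is the inner automorphism given by the image of diag(i, -i), where i ∈ F_q is a primitive 4th root of unity. -/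
open Matrix
open scoped MatrixGroups

/-- The matrix `g = diag(1, α)`. -/
def gMat (F : Type*) [Field F] (α : Fˣ) : Matrix (Fin 2) (Fin 2) F := !![1, 0; 0, (α : F)]

/-- The inverse matrix `g⁻¹ = diag(1, α⁻¹)`. -/
def gMatInv (F : Type*) [Field F] (α : Fˣ) : Matrix (Fin 2) (Fin 2) F :=
  !![1, 0; 0, ((α⁻¹ : Fˣ) : F)]

/-- The map `A ↦ g (σ A) g⁻¹` on `SL(2, F)`, with `g = diag(1, α)`: first apply the field
homomorphism `σ` entrywise, then conjugate by `g`. -/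
def conjFrobSL (F : Type*) [Field F] (σ : F →+* F) (α : Fˣ)
    (A : Matrix.SpecialLinearGroup (Fin 2) F) : Matrix.SpecialLinearGroup (Fin 2) F :=
  ⟨gMat F α * (A : Matrix (Fin 2) (Fin 2) F).map σ * gMatInv F α, by
    have hdet : ((A : Matrix (Fin 2) (Fin 2) F).map σ).det = 1 := by
      rw [show ((A : Matrix (Fin 2) (Fin 2) F).map σ)
            = σ.mapMatrix (A : Matrix (Fin 2) (Fin 2) F) from rfl,
        ← RingHom.map_det, A.2, _root_.map_one]
    rw [Matrix.det_mul, Matrix.det_mul, hdet, mul_one]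
    simp [gMat, gMatInv, Matrix.det_fin_two_of, ← Units.val_mul]⟩

/-- The matrix `diag(i, -i)` as an element of `SL(2, F)`, where `i² = -1`. -/
def diagI (F : Type*) [Field F] (i : F) (hi : i * i = -1) :
    Matrix.SpecialLinearGroup (Fin 2) F :=
  ⟨!![i, 0; 0, -i], by simp [Matrix.det_fin_two_of, mul_neg, hi]⟩

/-! Writing `A = !![a, b; c, d]`, the map sends `A` to `!![σ a, σ b / α; α σ c, σ d]`. Since
`σ² = (x ↦ x ^ q)` is the identity and `σ α * α = α ^ (r + 1) = -1` (for `r ≡ 3 mod 4` one has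
`v₂(q - 1) = v₂(r + 1) + 1`, so `α ^ (r + 1)` has order 2), applying it twice gives
`!![a, -b; -c, d]`, which is conjugation by `D = diag(i, -i)`. As `D² = -1` is central, the fourth
power is the identity on `PSL(2, q)`; in odd characteristic `D` does not commute with
`!![1, 1; 0, 1]` modulo `±1`, so the square is not. -/

theorem Nat.factorization_two_sq_sub_one_s13 {r : ℕ} (hr : r % 4 = 3) :
    (r ^ 2 - 1).factorization 2 = (r + 1).factorization 2 + 1 := by
  obtain ⟨m, rfl⟩ : ∃ m, r = 4 * m + 3 := ⟨r / 4, by omega⟩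
  have hsq : (4 * m + 3) ^ 2 - 1 = 2 * (2 * m + 1) * (4 * m + 3 + 1) :=
    Nat.sub_eq_of_eq_add (by ring)
  have hodd : (2 * m + 1).factorization 2 = 0 :=
    Nat.factorization_eq_zero_of_not_dvd (by omega)
  rw [hsq, Nat.factorization_mul (by omega) (by omega), Nat.factorization_mul (by omega) (by omega)]
  simp [hodd, Nat.prime_two.factorization_self]
  omega

theorem Units.val_pow_eq_neg_one_of_orderOf_eq {F : Type*} [Field F] {α : Fˣ} {n : ℕ}
    (hn : n ≠ 0) (hα : orderOf α = 2 ^ (n.factorization 2 + 1)) : (α : F) ^ n = -1 := by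
  have hsq : (α ^ n) ^ 2 = 1 := by
    rw [← pow_mul, ← orderOf_dvd_iff_pow_eq_one, hα, pow_succ]
    exact mul_dvd_mul_right (Nat.ordProj_dvd n 2) 2
  have hne : α ^ n ≠ 1 := fun h =>
    Nat.pow_succ_factorization_not_dvd hn Nat.prime_two (hα ▸ orderOf_dvd_of_pow_eq_one h)
  have hsq' : ((α : F) ^ n) ^ 2 = 1 := by simpa using congr_arg Units.val hsq
  exact (sq_eq_one_iff.mp hsq').resolve_left fun h => hne (Units.ext (by simpa using h))

theorem Matrix.SpecialLinearGroup.exists_eq_smul_of_mk_eq_mk {n R : Type*} [Fintype n]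
    [DecidableEq n] [CommRing R] {A B : Matrix.SpecialLinearGroup n R}
    (h : (A : Matrix.ProjectiveSpecialLinearGroup n R) = B) :
    ∃ t : R, (B : Matrix n n R) = t • (A : Matrix n n R) := by
  obtain ⟨t, -, ht⟩ := Matrix.SpecialLinearGroup.mem_center_iff.mp (QuotientGroup.eq.mp h)
  refine ⟨t, ?_⟩
  rw [← mul_inv_cancel_left A B, Matrix.SpecialLinearGroup.coe_mul, ← ht]
  ext a b
  simp [mul_comm]

theorem orderOf_eq_four_of_mul_self_eq_conj {G : Type*} [Group G] {e : MulAut G} {d : G}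
    (he : e * e = MulAut.conj d) (hd : d ^ 2 = 1) (hconj : MulAut.conj d ≠ 1) :
    orderOf e = 4 := by
  have he2 : e ^ 2 = MulAut.conj d := by rw [sq, he]
  refine orderOf_eq_prime_pow (p := 2) (n := 1) (by rwa [pow_one, he2]) ?_
  rw [show 2 ^ (1 + 1) = 2 * 2 from rfl, pow_mul, he2, ← map_pow, hd, map_one]

section conjFrob

variable {F : Type*} [Field F] (σ : F →+* F) (α : Fˣ)

theorem gMat_mul_gMatInv : gMat F α * gMatInv F α = 1 := by
  simp [gMat, gMatInv, ← Matrix.one_fin_two]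

theorem gMatInv_mul_gMat : gMatInv F α * gMat F α = 1 := by
  simp [gMat, gMatInv, ← Matrix.one_fin_two]

theorem coe_conjFrobSL (A : SL(2, F)) :
    (conjFrobSL F σ α A : Matrix (Fin 2) (Fin 2) F) =
      gMat F α * (A : Matrix (Fin 2) (Fin 2) F).map σ * gMatInv F α :=
  rfl

theorem coe_conjFrobSL_fin_two (A : SL(2, F)) :
    (conjFrobSL F σ α A : Matrix (Fin 2) (Fin 2) F) =
      !![σ (A 0 0), σ (A 0 1) * (α : F)⁻¹; α * σ (A 1 0), σ (A 1 1)] := by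
  rw [coe_conjFrobSL, Matrix.eta_fin_two ((A : Matrix (Fin 2) (Fin 2) F).map σ)]
  simp [gMat, gMatInv, mul_comm (α : F)]

def conjFrobSLHom : SL(2, F) →* SL(2, F) where
  toFun := conjFrobSL F σ α
  map_one' := Subtype.ext <| by simp [coe_conjFrobSL, gMat_mul_gMatInv]
  map_mul' A B := Subtype.ext <| by
    simp only [coe_conjFrobSL, Matrix.SpecialLinearGroup.coe_mul, Matrix.map_mul,
      Matrix.mul_assoc, ← Matrix.mul_assoc (gMatInv F α) (gMat F α), gMatInv_mul_gMat,
      Matrix.one_mul]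

theorem conjFrobSL_mem_center {A : SL(2, F)} (hA : A ∈ Subgroup.center SL(2, F)) :
    conjFrobSL F σ α A ∈ Subgroup.center SL(2, F) := by
  obtain ⟨t, ht, htA⟩ := Matrix.SpecialLinearGroup.mem_center_iff.mp hA
  refine Matrix.SpecialLinearGroup.mem_center_iff.mpr ⟨σ t, by rw [← map_pow, ht, map_one], ?_⟩
  rw [coe_conjFrobSL_fin_two, ← htA]
  ext a b
  fin_cases a <;> fin_cases b <;> simp

theorem coe_conjFrobSL_conjFrobSL (hσ : Function.Involutive σ) (hα : σ α * α = -1)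
    (A : SL(2, F)) :
    (conjFrobSL F σ α (conjFrobSL F σ α A) : Matrix (Fin 2) (Fin 2) F) =
      !![A 0 0, -A 0 1; -A 1 0, A 1 1] := by
  have hα' : (σ α)⁻¹ * (α : F)⁻¹ = -1 := by rw [← mul_inv, hα, inv_neg_one]
  rw [coe_conjFrobSL_fin_two, coe_conjFrobSL_fin_two]
  ext a b
  fin_cases a <;> fin_cases b <;> simp [map_inv₀, hσ _]
  · linear_combination (A 0 1 : F) * hα'
  · linear_combination (A 1 0 : F) * hα

end conjFrob

section diagI

variable {F : Type*} [Field F] (i : F) (hi : i * i = -1)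

theorem coe_diagI_mul_mul_inv (A : SL(2, F)) :
    ((diagI F i hi * A * (diagI F i hi)⁻¹ : SL(2, F)) : Matrix (Fin 2) (Fin 2) F) =
      !![A 0 0, -A 0 1; -A 1 0, A 1 1] := by
  rw [Matrix.SpecialLinearGroup.coe_mul, Matrix.SpecialLinearGroup.coe_mul,
    Matrix.SpecialLinearGroup.coe_inv, Matrix.eta_fin_two (A : Matrix (Fin 2) (Fin 2) F)]
  simp only [diagI, Matrix.adjugate_fin_two_of]
  ext a b
  fin_cases a <;> fin_cases b <;> simp
  · linear_combination -(A 0 0 : F) * hi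
  · linear_combination (A 0 1 : F) * hi
  · linear_combination (A 1 0 : F) * hi
  · linear_combination -(A 1 1 : F) * hi

theorem diagI_sq_mem_center : diagI F i hi ^ 2 ∈ Subgroup.center SL(2, F) := by
  refine Matrix.SpecialLinearGroup.mem_center_iff.mpr ⟨-1, by norm_num, ?_⟩
  rw [sq, Matrix.SpecialLinearGroup.coe_mul]
  ext a b
  fin_cases a <;> fin_cases b <;> simp [diagI, hi]

theorem conj_mk_diagI_ne_one (h2 : (2 : F) ≠ 0) :
    MulAut.conj (diagI F i hi : PSL(2, F)) ≠ 1 := by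
  intro h
  let T : SL(2, F) := ⟨!![1, 1; 0, 1], by simp [Matrix.det_fin_two_of]⟩
  have hT : ((diagI F i hi * T * (diagI F i hi)⁻¹ : SL(2, F)) : PSL(2, F)) = T := by
    simpa using DFunLike.congr_fun h (T : PSL(2, F))
  obtain ⟨t, ht⟩ := Matrix.SpecialLinearGroup.exists_eq_smul_of_mk_eq_mk hT.symm
  rw [coe_diagI_mul_mul_inv] at ht
  have h00 := congr_fun₂ ht 0 0
  have h01 := congr_fun₂ ht 0 1
  simp [T] at h00 h01
  exact h2 (by linear_combination h00 - h01)

end diagI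

section pslConjFrob

variable {F : Type*} [Field F] (σ : F →+* F) (α : Fˣ)

theorem conjFrobSL_conjFrobSL (hσ : Function.Involutive σ) (hα : σ α * α = -1)
    (i : F) (hi : i * i = -1) (A : SL(2, F)) :
    conjFrobSL F σ α (conjFrobSL F σ α A) = diagI F i hi * A * (diagI F i hi)⁻¹ :=
  Subtype.ext <| by rw [coe_conjFrobSL_conjFrobSL σ α hσ hα, coe_diagI_mul_mul_inv]

def pslConjFrob : PSL(2, F) →* PSL(2, F) :=
  QuotientGroup.map _ _ (conjFrobSLHom σ α) fun _ hA => conjFrobSL_mem_center σ α hA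

theorem pslConjFrob_mk (A : SL(2, F)) :
    pslConjFrob σ α (A : PSL(2, F)) = (conjFrobSL F σ α A : PSL(2, F)) :=
  rfl

theorem pslConjFrob_pslConjFrob (hσ : Function.Involutive σ) (hα : σ α * α = -1)
    (i : F) (hi : i * i = -1) (x : PSL(2, F)) :
    pslConjFrob σ α (pslConjFrob σ α x) = MulAut.conj (diagI F i hi : PSL(2, F)) x := by
  induction x using QuotientGroup.induction_on with
  | H A => rw [pslConjFrob_mk, pslConjFrob_mk, conjFrobSL_conjFrobSL σ α hσ hα i hi]; rfl

end pslConjFrob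

theorem psl_frob_conj_aut_general (F : Type*) [Field F] [Fintype F]
    (r : ℕ) (hr : Odd r) (hr4 : r % 4 = 3)
    (hcard : Fintype.card F = r ^ 2)
    (σ : F →+* F) (hσ : ∀ x : F, σ x = x ^ r)
    (α : Fˣ) (hα : orderOf α = 2 ^ ((Fintype.card F - 1).factorization 2))
    (i : F) (hi : i * i = -1) :
    ∃ e : MulAut (Matrix.ProjectiveSpecialLinearGroup (Fin 2) F),
      (∀ A : Matrix.SpecialLinearGroup (Fin 2) F,
          e (QuotientGroup.mk A) = QuotientGroup.mk (conjFrobSL F σ α A)) ∧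
      orderOf e = 4 ∧
      (∀ x : Matrix.ProjectiveSpecialLinearGroup (Fin 2) F,
          (e * e) x = (QuotientGroup.mk (diagI F i hi)) * x *
            (QuotientGroup.mk (diagI F i hi))⁻¹) := by
  have hσσ : Function.Involutive σ := fun x => by
    rw [hσ, hσ, ← pow_mul, ← sq, ← hcard, FiniteField.pow_card]
  have hασ : σ α * α = -1 := by
    rw [hσ, ← pow_succ]
    refine Units.val_pow_eq_neg_one_of_orderOf_eq (Nat.succ_ne_zero r) ?_
    rw [hα, hcard, Nat.factorization_two_sq_sub_one_s13 hr4]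
  have h2 : (2 : F) ≠ 0 := Ring.two_ne_zero fun hchar => by
    have hcard2 := FiniteField.even_card_of_char_two hchar
    rw [hcard, ← Nat.even_iff] at hcard2
    exact Nat.not_even_iff_odd.mpr hr.pow hcard2
  have hsq := pslConjFrob_pslConjFrob σ α hσσ hασ i hi
  have hbij : Function.Bijective (pslConjFrob σ α) := by
    have hconj := (MulAut.conj (diagI F i hi : PSL(2, F))).bijective
    rw [← funext hsq] at hconj
    exact ⟨hconj.1.of_comp, hconj.2.of_comp⟩
  set e := MulEquiv.ofBijective _ hbij
  have he : e * e = MulAut.conj (diagI F i hi : PSL(2, F)) := MulEquiv.ext hsq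
  have hD : (diagI F i hi : PSL(2, F)) ^ 2 = 1 := by
    rw [← QuotientGroup.mk_pow, QuotientGroup.eq_one_iff]
    exact diagI_sq_mem_center i hi
  exact ⟨e, pslConjFrob_mk σ α,
    orderOf_eq_four_of_mul_self_eq_conj he hD (conj_mk_diagI_ne_one i hi h2), hsq⟩

/-- Let `q = r^2` be the square of an odd prime power with `r ≡ 3 (mod 4)`, `F` the field with
`q` elements, `σ : x ↦ x^r` the Frobenius, `α` of maximal 2-power order in `Fˣ`, and
`g = diag(1, α)`. Then the map on `PSL(2, F)` induced by `A ↦ g (σ A) g⁻¹` is an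
automorphism of order 4 whose square is the inner automorphism given by the image of
`diag(i, -i)`, where `i² = -1`. -/
theorem psl_frob_conj_aut (F : Type*) [Field F] [Fintype F]
    (r : ℕ) (hr : Odd r) (hpp : IsPrimePow r) (hr4 : r % 4 = 3)
    (hcard : Fintype.card F = r ^ 2)
    (σ : F →+* F) (hσ : ∀ x : F, σ x = x ^ r)
    (α : Fˣ) (hα : orderOf α = 2 ^ ((Fintype.card F - 1).factorization 2))
    (i : F) (hi : i * i = -1) :
    ∃ e : MulAut (Matrix.ProjectiveSpecialLinearGroup (Fin 2) F),
      (∀ A : Matrix.SpecialLinearGroup (Fin 2) F,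
          e (QuotientGroup.mk A) = QuotientGroup.mk (conjFrobSL F σ α A)) ∧
      orderOf e = 4 ∧
      (∀ x : Matrix.ProjectiveSpecialLinearGroup (Fin 2) F,
          (e * e) x = (QuotientGroup.mk (diagI F i hi)) * x *
            (QuotientGroup.mk (diagI F i hi))⁻¹) :=
  psl_frob_conj_aut_general F r hr hr4 hcard σ hσ α hα i hi
end
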